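/- Suppose a probability measure $\hat{G}$ on $\mathbb{R}^d$ satisfies $\frac{1}{n}\sum_{i=1}^n\log f_{\hat G,\Sigma_i}(X_i) \ge \sup_{G}\frac{1}{n}\sum_{i=1}^n\log f_{G,\Sigma_i}(X_i) - q$ for some $q > 0$, where the supremum is over all probability measures on $\mathbb{R}^d$. Then for every $j \in \{1,\dots,n\}$, $f_{\hat G,\Sigma_j}(X_j) \ge e^{-nq - \log n}\cdot\frac{1}{e\sqrt{\det(2\pi\Sigma_j)}}$. -/

import Mathlib

open MeasureTheory Matrix Finset

noncomputable def gaussDensity {d : ℕ} (S : Matrix (Fin d) (Fin d) ℝ)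
    (x : Fin d → ℝ) : ℝ :=
  (Real.sqrt ((2 * Real.pi) ^ d * S.det))⁻¹ *
    Real.exp (-(1 / 2) * (x ⬝ᵥ S⁻¹.mulVec x))

noncomputable def mixDensity {d : ℕ} (G : Measure (Fin d → ℝ))
    (S : Matrix (Fin d) (Fin d) ℝ) (x : Fin d → ℝ) : ℝ :=
  ∫ θ, gaussDensity S (x - θ) ∂G

/-!
Moving mass `1/n` of `Ĝ` onto the atom `X_j` gives a probability measure whose likelihood at
`X_j` is at least `φ_{Σ_j}(0)/n`, while every other likelihood loses at most a factor `1 - 1/n`.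
Near-optimality of `Ĝ` therefore gives
`log f_{Ĝ,Σ_j}(X_j) ≥ log (φ_{Σ_j}(0)/n) + (n - 1) log (1 - 1/n) - nq`,
and `(n - 1) log (1 - 1/n) ≥ -1`.
-/

section Gaussian

variable {d : ℕ} {S : Matrix (Fin d) (Fin d) ℝ}

lemma gaussDensity_zero (S : Matrix (Fin d) (Fin d) ℝ) :
    gaussDensity S 0 = (Real.sqrt ((2 * Real.pi) ^ d * S.det))⁻¹ := by
  simp [gaussDensity]

lemma gaussDensity_pos (hS : S.PosDef) (x : Fin d → ℝ) : 0 < gaussDensity S x := by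
  have : 0 < (2 * Real.pi) ^ d * S.det := mul_pos (by positivity) hS.det_pos
  unfold gaussDensity
  positivity

lemma gaussDensity_le_gaussDensity_zero (hS : S.PosDef) (x : Fin d → ℝ) :
    gaussDensity S x ≤ gaussDensity S 0 := by
  have hquad : 0 ≤ x ⬝ᵥ S⁻¹ *ᵥ x := by
    simpa using hS.inv.posSemidef.dotProduct_mulVec_nonneg x
  rw [gaussDensity_zero, gaussDensity]
  exact mul_le_of_le_one_right (by positivity) (Real.exp_le_one_iff.2 (by linarith))

lemma continuous_gaussDensity_sub (S : Matrix (Fin d) (Fin d) ℝ) (x : Fin d → ℝ) :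
    Continuous fun θ => gaussDensity S (x - θ) := by
  unfold gaussDensity
  simp only [dotProduct, Matrix.mulVec]
  fun_prop

lemma integrable_gaussDensity_sub (hS : S.PosDef) (x : Fin d → ℝ)
    (μ : Measure (Fin d → ℝ)) [IsFiniteMeasure μ] :
    Integrable (fun θ => gaussDensity S (x - θ)) μ := by
  refine Integrable.mono' (integrable_const (gaussDensity S 0))
    (continuous_gaussDensity_sub S x).aestronglyMeasurable (ae_of_all _ fun θ => ?_)
  rw [Real.norm_of_nonneg (gaussDensity_pos hS _).le]
  exact gaussDensity_le_gaussDensity_zero hS _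

lemma mixDensity_nonneg (hS : S.PosDef) (G : Measure (Fin d → ℝ)) (x : Fin d → ℝ) :
    0 ≤ mixDensity G S x :=
  integral_nonneg fun _ => (gaussDensity_pos hS _).le

lemma mixDensity_pos (hS : S.PosDef) (G : Measure (Fin d → ℝ)) [IsFiniteMeasure G]
    [NeZero G] (x : Fin d → ℝ) : 0 < mixDensity G S x := by
  rw [mixDensity, integral_pos_iff_support_of_nonneg (fun θ => (gaussDensity_pos hS _).le)
    (integrable_gaussDensity_sub hS x G), Function.support_eq_univ
    fun θ => (gaussDensity_pos hS _).ne']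
  exact Measure.measure_univ_pos.2 (NeZero.ne G)

end Gaussian

section DiracMixture

noncomputable def diracMixture {α : Type*} [MeasurableSpace α] (t : ℝ) (x : α)
    (G : Measure α) : Measure α :=
  ENNReal.ofReal t • Measure.dirac x + ENNReal.ofReal (1 - t) • G

lemma isProbabilityMeasure_diracMixture {α : Type*} [MeasurableSpace α] {t : ℝ}
    (ht₀ : 0 ≤ t) (ht₁ : t ≤ 1) (x : α) (G : Measure α) [IsProbabilityMeasure G] :
    IsProbabilityMeasure (diracMixture t x G) := by
  constructor
  simp only [diracMixture, Measure.add_apply, Measure.smul_apply, measure_univ, smul_eq_mul,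
    mul_one]
  rw [← ENNReal.ofReal_add ht₀ (by linarith), add_sub_cancel, ENNReal.ofReal_one]

variable {d : ℕ} {S : Matrix (Fin d) (Fin d) ℝ} {t : ℝ}

lemma mixDensity_diracMixture (hS : S.PosDef) (ht₀ : 0 ≤ t) (ht₁ : t ≤ 1)
    (x : Fin d → ℝ) (G : Measure (Fin d → ℝ)) [IsFiniteMeasure G] (y : Fin d → ℝ) :
    mixDensity (diracMixture t x G) S y
      = t * gaussDensity S (y - x) + (1 - t) * mixDensity G S y := by
  rw [mixDensity, diracMixture,
    integral_add_measure ((integrable_gaussDensity_sub hS y _).smul_measure ENNReal.ofReal_ne_top)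
      ((integrable_gaussDensity_sub hS y _).smul_measure ENNReal.ofReal_ne_top),
    integral_smul_measure, integral_smul_measure, integral_dirac,
    ENNReal.toReal_ofReal ht₀, ENNReal.toReal_ofReal (by linarith), smul_eq_mul, smul_eq_mul,
    mixDensity]

lemma mul_gaussDensity_zero_le_mixDensity_diracMixture (hS : S.PosDef) (ht₀ : 0 ≤ t)
    (ht₁ : t ≤ 1) (x : Fin d → ℝ) (G : Measure (Fin d → ℝ)) [IsFiniteMeasure G] :
    t * gaussDensity S 0 ≤ mixDensity (diracMixture t x G) S x := by
  rw [mixDensity_diracMixture hS ht₀ ht₁, sub_self]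
  have := mixDensity_nonneg hS G x
  nlinarith

lemma mul_mixDensity_le_mixDensity_diracMixture (hS : S.PosDef) (ht₀ : 0 ≤ t)
    (ht₁ : t ≤ 1) (x : Fin d → ℝ) (G : Measure (Fin d → ℝ)) [IsFiniteMeasure G]
    (y : Fin d → ℝ) :
    (1 - t) * mixDensity G S y ≤ mixDensity (diracMixture t x G) S y := by
  rw [mixDensity_diracMixture hS ht₀ ht₁]
  have := gaussDensity_pos hS (y - x)
  nlinarith

lemma log_one_sub_add_log_mixDensity_le (hS : S.PosDef) (ht₀ : 0 ≤ t) (ht₁ : t < 1)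
    (x : Fin d → ℝ) (G : Measure (Fin d → ℝ)) [IsFiniteMeasure G] [NeZero G]
    (y : Fin d → ℝ) :
    Real.log (1 - t) + Real.log (mixDensity G S y)
      ≤ Real.log (mixDensity (diracMixture t x G) S y) := by
  have hpos : 0 < 1 - t := sub_pos.2 ht₁
  rw [← Real.log_mul hpos.ne' (mixDensity_pos hS G y).ne']
  exact Real.log_le_log (mul_pos hpos (mixDensity_pos hS G y))
    (mul_mixDensity_le_mixDensity_diracMixture hS ht₀ ht₁.le x G y)

end DiracMixture

lemma neg_one_le_sub_one_mul_log_one_sub_inv {x : ℝ} (hx : 1 ≤ x) :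
    -1 ≤ (x - 1) * Real.log (1 - x⁻¹) := by
  rcases hx.eq_or_lt with rfl | hx
  · simp
  have hx₁ : 0 < x - 1 := sub_pos.2 hx
  have hinv : 1 - (1 - x⁻¹)⁻¹ = -(x - 1)⁻¹ := by
    field_simp [hx₁.ne']
    ring
  calc (-1 : ℝ) = (x - 1) * (1 - (1 - x⁻¹)⁻¹) := by rw [hinv]; field_simp
    _ ≤ (x - 1) * Real.log (1 - x⁻¹) := mul_le_mul_of_nonneg_left
        (Real.one_sub_inv_le_log_of_pos (sub_pos.2 (inv_lt_one_of_one_lt₀ hx))) hx₁.le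

lemma le_of_sum_le_sum_add_of_forall_ne {ι : Type*} [Fintype ι] [DecidableEq ι]
    {a b : ι → ℝ} {C k : ℝ} (j : ι) (hsum : ∑ i, a i ≤ ∑ i, b i + C)
    (hne : ∀ i ≠ j, k + b i ≤ a i) :
    a j + ((Fintype.card ι : ℝ) - 1) * k - C ≤ b j := by
  have hcompl : ∑ i ∈ {j}ᶜ, (k + b i) ≤ ∑ i ∈ {j}ᶜ, a i :=
    sum_le_sum fun i hi => hne i (by simpa using hi)
  rw [sum_add_distrib, sum_const, card_compl, card_singleton, nsmul_eq_mul,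
    Nat.cast_sub (Fintype.card_pos_iff.2 ⟨j⟩), Nat.cast_one] at hcompl
  rw [Fintype.sum_eq_add_sum_compl j a, Fintype.sum_eq_add_sum_compl j b] at hsum
  linarith

theorem approximate_npmle_likelihood_lower_bound_general {d n : ℕ}
    (X : Fin n → (Fin d → ℝ))
    (Sig : Fin n → Matrix (Fin d) (Fin d) ℝ)
    (hpd : ∀ i, (Sig i).PosDef)
    (Ghat : Measure (Fin d → ℝ)) [IsProbabilityMeasure Ghat]
    (q : ℝ)
    (happrox : ∀ (G : Measure (Fin d → ℝ)), IsProbabilityMeasure G →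
      (1 / (n : ℝ)) * ∑ i, Real.log (mixDensity G (Sig i) (X i))
        ≤ (1 / (n : ℝ)) * ∑ i, Real.log (mixDensity Ghat (Sig i) (X i)) + q) :
    ∀ j : Fin n,
      mixDensity Ghat (Sig j) (X j)
        ≥ Real.exp (-(n * q) - Real.log n) *
            (1 / (Real.exp 1 * Real.sqrt ((2 * Real.pi) ^ d * (Sig j).det))) := by
  intro j
  have hn : (1 : ℝ) ≤ n := by exact_mod_cast j.pos
  set G := diracMixture (n : ℝ)⁻¹ (X j) Ghat
  have ht₀ : (0 : ℝ) ≤ (n : ℝ)⁻¹ := by positivity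
  have ht₁ : (n : ℝ)⁻¹ ≤ 1 := inv_le_one_of_one_le₀ hn
  have hsum : ∑ i, Real.log (mixDensity G (Sig i) (X i))
      ≤ ∑ i, Real.log (mixDensity Ghat (Sig i) (X i)) + n * q := by
    have h := happrox G (isProbabilityMeasure_diracMixture ht₀ ht₁ _ _)
    field_simp at h
    linarith
  have hoff : ∀ i ≠ j, Real.log (1 - (n : ℝ)⁻¹) + Real.log (mixDensity Ghat (Sig i) (X i))
      ≤ Real.log (mixDensity G (Sig i) (X i)) := fun i hij =>
    log_one_sub_add_log_mixDensity_le (hpd i) ht₀ (inv_lt_one_of_one_lt₀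
      (Nat.one_lt_cast.2 (Fin.nontrivial_iff_two_le.1 ⟨i, j, hij⟩))) _ _ _
  have hdiag : Real.log ((n : ℝ)⁻¹ * gaussDensity (Sig j) 0)
      ≤ Real.log (mixDensity G (Sig j) (X j)) :=
    Real.log_le_log (mul_pos (by positivity) (gaussDensity_pos (hpd j) 0))
      (mul_gaussDensity_zero_le_mixDensity_diracMixture (hpd j) ht₀ ht₁ _ _)
  have hlog := le_of_sum_le_sum_add_of_forall_ne j hsum hoff
  rw [Fintype.card_fin] at hlog
  calc Real.exp (-(n * q) - Real.log n) *
        (1 / (Real.exp 1 * Real.sqrt ((2 * Real.pi) ^ d * (Sig j).det)))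
      = Real.exp (Real.log ((n : ℝ)⁻¹ * gaussDensity (Sig j) 0) - 1 - n * q) := by
        rw [Real.exp_sub, Real.exp_sub, Real.exp_sub, Real.exp_neg,
          Real.exp_log (mul_pos (by positivity) (gaussDensity_pos (hpd j) 0)),
          Real.exp_log (by positivity), gaussDensity_zero]
        field_simp
    _ ≤ mixDensity Ghat (Sig j) (X j) :=
        (Real.le_log_iff_exp_le (mixDensity_pos (hpd j) Ghat _)).1
          (by linarith [neg_one_le_sub_one_mul_log_one_sub_inv hn])

/-- An approximate NPMLE (within `q` of the optimal average log-likelihood)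
has fitted likelihood values bounded below:
`f_{Ĝ,Σⱼ}(Xⱼ) ≥ e^{-nq - log n} / (e √(det 2πΣⱼ))`. -/
theorem approximate_npmle_likelihood_lower_bound {d n : ℕ} (hn : 0 < n)
    (X : Fin n → (Fin d → ℝ))
    (Sig : Fin n → Matrix (Fin d) (Fin d) ℝ)
    (hpd : ∀ i, (Sig i).PosDef)
    (Ghat : Measure (Fin d → ℝ)) [IsProbabilityMeasure Ghat]
    (q : ℝ) (hq : 0 < q)
    (happrox : ∀ (G : Measure (Fin d → ℝ)), IsProbabilityMeasure G →
      (1 / (n : ℝ)) * ∑ i, Real.log (mixDensity G (Sig i) (X i))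
        ≤ (1 / (n : ℝ)) * ∑ i, Real.log (mixDensity Ghat (Sig i) (X i)) + q) :
    ∀ j : Fin n,
      mixDensity Ghat (Sig j) (X j)
        ≥ Real.exp (-(n * q) - Real.log n) *
            (1 / (Real.exp 1 * Real.sqrt ((2 * Real.pi) ^ d * (Sig j).det))) :=
  approximate_npmle_likelihood_lower_bound_general X Sig hpd Ghat q happrox
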